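/- Let X, Y be Polish spaces, c : X × Y → [0,∞] Borel measurable, X₀ ⊆ X a nonempty Borel set, and φ : X₀ → ℝ Borel measurable. Then the c-transform ψ : Y → [-∞,∞) defined by ψ(y) = inf_{x ∈ X₀} (c(x,y) − φ(x)) is universally measurable. -/

import Mathlib

open MeasureTheory Set
open scoped ENNReal

noncomputable section

def UnivMeasurableSet {α : Type*} [MeasurableSpace α] (S : Set α) : Prop :=
  ∀ μ : Measure α, SigmaFinite μ → NullMeasurableSet S μ

def UnivMeasurable {α β : Type*} [MeasurableSpace α] [MeasurableSpace β] (f : α → β) : Prop :=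
  ∀ B : Set β, MeasurableSet B → UnivMeasurableSet (f ⁻¹' B)

/-!
The sublevel set `{y | ψ y < a}` is the projection to `Y` of the Borel set
`{(x, y) | c (x, y) - φ x < a} ⊆ X₀ × Y`, hence analytic, so it suffices that analytic sets are
universally measurable. By passing to an equivalent finite measure we may assume `μ` finite, and
an analytic set is a continuous image `f (ℕ → ℕ)`. Choquet's capacitability argument then
approximates it from inside: using continuity of (outer) measure along increasing unions, choose
bounds `σ 0, σ 1, …` one coordinate at a time so that restricting to `x i ≤ σ i` for `i < n`
loses measure at most `δ 0 + ⋯ + δ (n - 1)`; the image of the compact box `∀ i, x i ≤ σ i`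
contains the intersection of the closures of these images, so it is a compact subset of
`f (ℕ → ℕ)` of almost full measure.
-/

open Filter Topology

namespace MeasureTheory

theorem _root_.Monotone.exists_measure_iUnion_le_add {α ι : Type*} [MeasurableSpace α]
    {μ : Measure α} [Preorder ι] [IsDirectedOrder ι] [Nonempty ι]
    [(atTop : Filter ι).IsCountablyGenerated] {s : ι → Set α} (hs : Monotone s)
    (hμ : μ (⋃ i, s i) ≠ ∞) {δ : ℝ≥0∞} (hδ : δ ≠ 0) : ∃ i, μ (⋃ i, s i) ≤ μ (s i) + δ := by
  rcases eq_or_ne (μ (⋃ i, s i)) 0 with h0 | h0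
  · exact ⟨Classical.arbitrary ι, by simp [h0]⟩
  have : μ (⋃ i, s i) - δ < ⨆ i, μ (s i) :=
    hs.measure_iUnion ▸ ENNReal.sub_lt_self hμ h0 hδ
  obtain ⟨i, hi⟩ := lt_iSup_iff.1 this
  exact ⟨i, tsub_le_iff_right.1 hi.le⟩

theorem iInter_closure_image_subset_image_pi {Y : Type*} [TopologicalSpace Y] [T2Space Y]
    [FirstCountableTopology Y] {f : (ℕ → ℕ) → Y} (hf : Continuous f) {L : ℕ → Set (ℕ → ℕ)}
    (σ : ℕ → ℕ) (hL : ∀ n, L (n + 1) ⊆ L n ∩ {x | x n ≤ σ n}) :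
    ⋂ n, closure (f '' L n) ⊆ f '' univ.pi fun i => Iic (σ i) := by
  have hL_le : ∀ {i n}, i < n → ∀ x ∈ L n, x i ≤ σ i := fun hin x hx =>
    (hL _ (antitone_nat_of_succ_le (fun n => (hL n).trans inter_subset_left) hin hx)).2
  intro y hy
  obtain ⟨U, hU⟩ := (𝓝 y).exists_antitone_basis
  have : ∀ n, ∃ x ∈ L n, f x ∈ U n := fun n => by
    obtain ⟨_, hyU, x, hx, rfl⟩ := mem_closure_iff_nhds.1 (mem_iInter.1 hy n) _ (hU.mem n)
    exact ⟨x, hx, hyU⟩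
  choose x hxL hxU using this
  -- Truncating `x n` to the box changes only coordinates `≥ n`, so a limit point of the
  -- truncations in the compact box is also a limit point of `x`.
  obtain ⟨a, ha, φ, hφ, hlim⟩ :=
    (isCompact_univ_pi fun i => (finite_Iic (σ i)).isCompact).tendsto_subseq
      (x := fun n i => min (x n i) (σ i)) fun n i _ => mem_Iic.2 (min_le_right _ _)
  have hxa : Tendsto (x ∘ φ) atTop (𝓝 a) := by
    rw [tendsto_pi_nhds] at hlim ⊢
    refine fun i => (hlim i).congr' ?_
    filter_upwards [eventually_gt_atTop i] with n hn
    exact min_eq_left (hL_le (hn.trans_le (hφ.id_le n)) _ (hxL _))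
  exact ⟨a, ha, tendsto_nhds_unique ((hf.tendsto a).comp hxa)
    ((hU.tendsto hxU).comp hφ.tendsto_atTop)⟩

theorem exists_measure_image_le_image_inter_add {α Y : Type*} [MeasurableSpace Y]
    (μ : Measure Y) (f : (ℕ → α) → Y) [Preorder α] [IsDirectedOrder α] [Nonempty α]
    [(atTop : Filter α).IsCountablyGenerated] {T : Set (ℕ → α)} (hT : μ (f '' T) ≠ ∞) (n : ℕ)
    {δ : ℝ≥0∞} (hδ : δ ≠ 0) : ∃ m, μ (f '' T) ≤ μ (f '' (T ∩ {x | x n ≤ m})) + δ := by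
  have hmono : Monotone fun m => f '' (T ∩ {x | x n ≤ m}) := fun a b hab =>
    image_mono (inter_subset_inter_right _ fun x hx => le_trans hx hab)
  have hunion : ⋃ m, f '' (T ∩ {x | x n ≤ m}) = f '' T := by
    rw [← image_iUnion, ← inter_iUnion, iUnion_eq_univ_iff.2 fun x => ⟨x n, le_refl (x n)⟩,
      inter_univ]
  simpa only [hunion] using hmono.exists_measure_iUnion_le_add (hunion ▸ hT) hδ

theorem exists_isCompact_subset_range_measure_le_add {Y : Type*} [TopologicalSpace Y]
    [T2Space Y] [FirstCountableTopology Y] [MeasurableSpace Y] [OpensMeasurableSpace Y]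
    (μ : Measure Y) [IsFiniteMeasure μ] {f : (ℕ → ℕ) → Y} (hf : Continuous f)
    {ε : ℝ≥0∞} (hε : ε ≠ 0) : ∃ K, IsCompact K ∧ K ⊆ range f ∧ μ (range f) ≤ μ K + ε := by
  obtain ⟨δ, hδ, hδε⟩ := ENNReal.exists_pos_sum_of_countable' hε ℕ
  choose σ hσ using fun (T : Set (ℕ → ℕ)) n =>
    exists_measure_image_le_image_inter_add μ f (measure_ne_top μ (f '' T)) n (hδ n).ne'
  let L : ℕ → Set (ℕ → ℕ) := fun n => Nat.rec univ (fun k Lk => Lk ∩ {x | x k ≤ σ Lk k}) n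
  have hLsucc : ∀ n, L (n + 1) = L n ∩ {x | x n ≤ σ (L n) n} := fun n => rfl
  have hloss : ∀ n, μ (range f) ≤ μ (f '' L n) + ∑ i ∈ Finset.range n, δ i := by
    intro n
    induction n with
    | zero => simp [L]
    | succ n ih =>
      calc μ (range f) ≤ μ (f '' L n) + ∑ i ∈ Finset.range n, δ i := ih
        _ ≤ μ (f '' L (n + 1)) + δ n + ∑ i ∈ Finset.range n, δ i := by
          rw [hLsucc]; gcongr; exact hσ _ _
        _ = μ (f '' L (n + 1)) + ∑ i ∈ Finset.range (n + 1), δ i := by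
          rw [Finset.sum_range_succ, add_assoc, add_comm (δ n)]
  have hanti : Antitone fun n => closure (f '' L n) :=
    antitone_nat_of_succ_le fun n => closure_mono (image_mono (hLsucc n ▸ inter_subset_left))
  refine ⟨f '' univ.pi fun i => Iic (σ (L i) i),
    (isCompact_univ_pi fun i => (finite_Iic _).isCompact).image hf, image_subset_range _ _, ?_⟩
  calc μ (range f) ≤ (⨅ n, μ (closure (f '' L n))) + ε := by
        rw [ENNReal.iInf_add]
        exact le_iInf fun n => (hloss n).trans (add_le_add (measure_mono subset_closure)
          ((ENNReal.sum_le_tsum _).trans hδε.le))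
    _ = μ (⋂ n, closure (f '' L n)) + ε := by
        rw [hanti.measure_iInter (fun n => measurableSet_closure.nullMeasurableSet)
          ⟨0, measure_ne_top μ _⟩]
    _ ≤ _ := by
        gcongr
        exact iInter_closure_image_subset_image_pi hf _ fun n => (hLsucc n).le

theorem nullMeasurableSet_of_forall_exists_subset_measure_le_add {α : Type*} [MeasurableSpace α]
    {μ : Measure α} {s : Set α} (hs : μ s ≠ ∞)
    (h : ∀ ε ≠ 0, ∃ t ⊆ s, MeasurableSet t ∧ μ s ≤ μ t + ε) : NullMeasurableSet s μ := by
  choose t hts ht hμt using fun n : ℕ => h (n : ℝ≥0∞)⁻¹ (ENNReal.inv_ne_zero.2 (by simp))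
  have hle : μ s ≤ μ (⋃ n, t n) := by
    refine ENNReal.le_of_forall_pos_le_add fun ε hε _ => ?_
    obtain ⟨n, hn⟩ := ENNReal.exists_inv_nat_lt (ENNReal.coe_ne_zero.2 hε.ne')
    exact (hμt n).trans (add_le_add (measure_mono (subset_iUnion t n)) hn.le)
  have hmeas := (MeasurableSet.iUnion ht).nullMeasurableSet (μ := μ)
  exact hmeas.congr (ae_eq_of_subset_of_measure_ge (iUnion_subset hts) hle hmeas hs)

section AnalyticSet

variable {Y : Type*} [TopologicalSpace Y] [T2Space Y] [FirstCountableTopology Y]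
  [MeasurableSpace Y] [OpensMeasurableSpace Y] {s : Set Y}

theorem AnalyticSet.nullMeasurableSet_of_isFiniteMeasure (hs : AnalyticSet s) (μ : Measure Y)
    [IsFiniteMeasure μ] : NullMeasurableSet s μ := by
  rw [AnalyticSet] at hs
  rcases hs with rfl | ⟨f, hf, rfl⟩
  · exact nullMeasurableSet_empty
  refine nullMeasurableSet_of_forall_exists_subset_measure_le_add (measure_ne_top μ _)
    fun ε hε => ?_
  obtain ⟨K, hK, hKf, hμK⟩ := exists_isCompact_subset_range_measure_le_add μ hf hε
  exact ⟨K, hKf, hK.measurableSet, hμK⟩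

theorem AnalyticSet.nullMeasurableSet (hs : AnalyticSet s) (μ : Measure Y) [SFinite μ] :
    NullMeasurableSet s μ :=
  (hs.nullMeasurableSet_of_isFiniteMeasure μ.toFinite).mono_ac (absolutelyContinuous_toFinite μ)

theorem AnalyticSet.univMeasurableSet (hs : AnalyticSet s) : UnivMeasurableSet s :=
  fun μ _ => hs.nullMeasurableSet μ

end AnalyticSet

theorem univMeasurable_of_forall_univMeasurableSet_preimage_Iio {α β : Type*}
    [MeasurableSpace α] [TopologicalSpace β] [LinearOrder β] [OrderTopology β]
    [SecondCountableTopology β] [MeasurableSpace β] [BorelSpace β] {f : α → β}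
    (hf : ∀ b, UnivMeasurableSet (f ⁻¹' Iio b)) : UnivMeasurable f :=
  fun _ hB μ hμ => measurable_of_Iio (mδ := NullMeasurableSpace.instMeasurableSpace (μ := μ))
    (fun b => hf b μ hμ) hB

theorem analyticSet_preimage_iInf_Iio {ι Y β : Type*} [MeasurableSpace ι]
    [StandardBorelSpace ι] [TopologicalSpace Y] [PolishSpace Y] [MeasurableSpace Y]
    [BorelSpace Y] [CompleteLinearOrder β] [TopologicalSpace β] [OrderTopology β]
    [MeasurableSpace β] [OpensMeasurableSpace β] {g : ι × Y → β} (hg : Measurable g) (b : β) :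
    AnalyticSet ((fun y => ⨅ i, g (i, y)) ⁻¹' Iio b) := by
  have : (fun y => ⨅ i, g (i, y)) ⁻¹' Iio b = Prod.snd '' (g ⁻¹' Iio b) := by
    ext y
    simp [iInf_lt_iff]
  rw [this]
  exact (hg measurableSet_Iio).analyticSet_image measurable_snd

theorem univMeasurable_iInf {ι Y β : Type*} [MeasurableSpace ι]
    [StandardBorelSpace ι] [TopologicalSpace Y] [PolishSpace Y] [MeasurableSpace Y]
    [BorelSpace Y] [CompleteLinearOrder β] [TopologicalSpace β] [OrderTopology β]
    [SecondCountableTopology β] [MeasurableSpace β] [BorelSpace β] {g : ι × Y → β}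
    (hg : Measurable g) : UnivMeasurable fun y => ⨅ i, g (i, y) :=
  univMeasurable_of_forall_univMeasurableSet_preimage_Iio fun b =>
    (analyticSet_preimage_iInf_Iio hg b).univMeasurableSet

end MeasureTheory

theorem cTransform_univMeasurable
    {X Y : Type*} [MeasurableSpace X] [TopologicalSpace X] [PolishSpace X] [BorelSpace X]
    [MeasurableSpace Y] [TopologicalSpace Y] [PolishSpace Y] [BorelSpace Y]
    (c : X × Y → ℝ≥0∞) (hc : Measurable c)
    (X₀ : Set X) (hX₀m : MeasurableSet X₀)
    (φ : X₀ → ℝ) (hφ : Measurable φ) :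
    UnivMeasurable (fun y : Y => ⨅ x : X₀, ((c ((x : X), y)).toEReal - (φ x : EReal))) := by
  have : StandardBorelSpace X₀ := hX₀m.standardBorel
  have hcost : Measurable fun p : X₀ × Y => (c ((p.1 : X), p.2)).toEReal :=
    measurable_coe_ennreal_ereal.comp
      (hc.comp ((measurable_subtype_coe.comp measurable_fst).prodMk measurable_snd))
  have hpot : Measurable fun p : X₀ × Y => (φ p.1 : EReal) :=
    (hφ.comp measurable_fst).coe_real_ereal
  refine univMeasurable_iInf (g := fun p : X₀ × Y => (c ((p.1 : X), p.2)).toEReal - φ p.1) ?_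
  simp_rw [sub_eq_add_neg]
  exact hcost.add hpot.neg
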